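/- Under the setting of Lemma 3.1 (y ∈ ℝ^d, Σ, S_t(θ) positive definite, likelihood p(y|θ) = f_N(y; η(θ), Σ) with η(θ) ~ N(μ_t(θ), S_t(θ))), suppose that conditioning additionally on a hypothetical observation (z*, η*) changes the emulator to η(θ) ~ N(μ_{t+1}(θ), S_t(θ) − Φ_t(θ,z*)), where given D_t the vector μ_{t+1}(θ) is distributed N(μ_t(θ), Φ_t(θ,z*)) and Φ_t(θ,z*) has entries cov_t(z_i^f, z*)cov_t(z_j^f, z*)/(ς_t²(z*)+υ). Then E_{η*|D_t}[ Var[p(y|θ) | (z*,η*) ∪ D_t] ] = (2^d π^{d/2}|Σ|^{1/2})^{-1} f_N(y; μ_t(θ), (1/2)Σ + S_t(θ)) − (2^d π^{d/2}|Σ + S_t(θ) − Φ_t(θ,z*)|^{1/2})^{-1} f_N(y; μ_t(θ), (1/2)(Σ + S_t(θ) + Φ_t(θ,z*))). -/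

import Mathlib

/-!
The second moment of the likelihood is `f_N(y; m, Σ + S_t - Φ)²`, and the square of a normal
density is, up to the factor `(2^d π^{d/2} |C|^{1/2})⁻¹`, the normal density with half the
covariance. The integrand is therefore a difference of two products `f_N(y; m, A) f_N(m; μ_t, Φ)`,
and completing the square in `m` shows that each integrates to `f_N(y; μ_t, A + Φ)`, the
marginal likelihood of `y`.
-/

open Matrix MeasureTheory

/-- Multivariate normal density on ℝ^d: `fN d C b a` is the density with mean `b`
and covariance `C`, evaluated at `a`. -/
noncomputable def fN (d : ℕ) (C : Matrix (Fin d) (Fin d) ℝ) (b a : Fin d → ℝ) : ℝ :=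
  (2 * Real.pi) ^ (-(d : ℝ) / 2) * C.det ^ (-(1 : ℝ) / 2) *
    Real.exp (-(1 / 2) * ((a - b) ⬝ᵥ (C⁻¹ *ᵥ (a - b))))

open Real

namespace Matrix

theorem PosDef.isSymm {n : Type*} {C : Matrix n n ℝ} (hC : C.PosDef) : C.IsSymm :=
  isHermitian_iff_isSymm.mp hC.isHermitian

section Symmetric

variable {n R : Type*} [Fintype n] [CommRing R] {P : Matrix n n R}

theorem IsSymm.dotProduct_mulVec_comm (hP : P.IsSymm) (u v : n → R) :
    u ⬝ᵥ (P *ᵥ v) = v ⬝ᵥ (P *ᵥ u) := by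
  rw [← dotProduct_transpose_mulVec, hP.eq]

theorem IsSymm.dotProduct_mulVec_sub (hP : P.IsSymm) (u v : n → R) :
    (u - v) ⬝ᵥ (P *ᵥ (u - v)) = u ⬝ᵥ (P *ᵥ u) - 2 * (u ⬝ᵥ (P *ᵥ v)) + v ⬝ᵥ (P *ᵥ v) := by
  rw [mulVec_sub, dotProduct_sub, sub_dotProduct, sub_dotProduct, hP.dotProduct_mulVec_comm v u]
  ring

end Symmetric

variable {n R : Type*} [Fintype n] [DecidableEq n] [CommRing R] {A B P Q : Matrix n n R}

theorem inv_add_inv_eq_mul_add_mul (hA : IsUnit A.det) (hB : IsUnit B.det) :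
    A⁻¹ + B⁻¹ = A⁻¹ * (A + B) * B⁻¹ := by
  rw [Matrix.mul_add, Matrix.add_mul, nonsing_inv_mul _ hA, Matrix.one_mul, Matrix.mul_assoc,
    mul_nonsing_inv _ hB, Matrix.mul_one, add_comm]

theorem inv_inv_add_inv (hA : IsUnit A.det) (hB : IsUnit B.det) :
    (A⁻¹ + B⁻¹)⁻¹ = B * (A + B)⁻¹ * A := by
  rw [inv_add_inv_eq_mul_add_mul hA hB, mul_inv_rev, mul_inv_rev, nonsing_inv_nonsing_inv _ hA,
    nonsing_inv_nonsing_inv _ hB, Matrix.mul_assoc]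

theorem inv_sub_inv_mul_inv_inv_add_inv_mul_inv (hA : IsUnit A.det) (hB : IsUnit B.det)
    (hAB : IsUnit (A + B).det) : A⁻¹ - A⁻¹ * (A⁻¹ + B⁻¹)⁻¹ * A⁻¹ = (A + B)⁻¹ :=
  calc A⁻¹ - A⁻¹ * (A⁻¹ + B⁻¹)⁻¹ * A⁻¹ = A⁻¹ * (A + B) * (A + B)⁻¹ - A⁻¹ * B * (A + B)⁻¹ := by
        rw [inv_inv_add_inv hA hB, Matrix.mul_assoc A⁻¹ (A + B), mul_nonsing_inv _ hAB]
        simp only [Matrix.mul_assoc, mul_nonsing_inv _ hA, Matrix.mul_one]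
    _ = (A + B)⁻¹ := by
        rw [← Matrix.sub_mul, ← Matrix.mul_sub, add_sub_cancel_right, nonsing_inv_mul _ hA,
          Matrix.one_mul]

/-- Completing the square in `m`. -/
theorem IsSymm.dotProduct_mulVec_add_dotProduct_mulVec (hP : P.IsSymm) (hQ : Q.IsSymm)
    (hPQ : IsUnit (P + Q).det) (y μ m : n → R) :
    (m - y) ⬝ᵥ (P *ᵥ (m - y)) + (m - μ) ⬝ᵥ (Q *ᵥ (m - μ))
      = (m - (P + Q)⁻¹ *ᵥ (P *ᵥ y + Q *ᵥ μ)) ⬝ᵥ ((P + Q) *ᵥ (m - (P + Q)⁻¹ *ᵥ (P *ᵥ y + Q *ᵥ μ)))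
        + (y - μ) ⬝ᵥ ((P - P * (P + Q)⁻¹ * P) *ᵥ (y - μ)) := by
  set G := (P + Q)⁻¹ * P
  have hμ : (P + Q)⁻¹ *ᵥ (P *ᵥ μ) + (P + Q)⁻¹ *ᵥ (Q *ᵥ μ) = μ := by
    rw [← mulVec_add, ← add_mulVec, mulVec_mulVec, nonsing_inv_mul _ hPQ, one_mulVec]
  have hc : m - (P + Q)⁻¹ *ᵥ (P *ᵥ y + Q *ᵥ μ) = (m - μ) - G *ᵥ (y - μ) := by
    simp only [G, ← mulVec_mulVec, mulVec_add, mulVec_sub]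
    linear_combination (norm := module) (-1 : R) • hμ
  have hPG : (P + Q) * G = P := by
    rw [← Matrix.mul_assoc, mul_nonsing_inv _ hPQ, Matrix.one_mul]
  rw [hc, ← sub_sub_sub_cancel_right m y μ, (hP.add hQ).dotProduct_mulVec_sub,
    hP.dotProduct_mulVec_sub]
  simp only [mulVec_mulVec, hPG]
  rw [hP.dotProduct_mulVec_comm (G *ᵥ _), mulVec_mulVec, ← Matrix.mul_assoc]
  simp only [sub_mulVec, add_mulVec, dotProduct_sub, dotProduct_add]
  ring

theorem det_inv_inv_add_inv {K : Type*} [Field K] {A B : Matrix n n K} (hA : IsUnit A.det)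
    (hB : IsUnit B.det) : (A⁻¹ + B⁻¹)⁻¹.det = A.det * B.det / (A + B).det := by
  rw [inv_inv_add_inv hA hB, det_mul, det_mul, det_nonsing_inv, Ring.inverse_eq_inv']
  ring

theorem PosDef.isUnit_det {C : Matrix n n ℝ} (hC : C.PosDef) : IsUnit C.det :=
  hC.det_pos.ne'.isUnit

end Matrix

section ChangeOfVariables

variable {ι : Type*} [Fintype ι] [DecidableEq ι] {M : Matrix ι ι ℝ}
  {E : Type*} [NormedAddCommGroup E]

theorem Matrix.measurableEmbedding_mulVec (hM : M.det ≠ 0) :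
    MeasurableEmbedding (M *ᵥ · : (ι → ℝ) → ι → ℝ) :=
  ((toLin' M).equivOfDetNeZero (by rwa [LinearMap.det_toLin'])).toContinuousLinearEquiv
    |>.toHomeomorph.measurableEmbedding

theorem Matrix.map_mulVec_volume (hM : M.det ≠ 0) :
    Measure.map (M *ᵥ ·) volume = ENNReal.ofReal |M.det|⁻¹ • (volume : Measure (ι → ℝ)) := by
  rw [← abs_inv, ← Real.map_matrix_volume_pi_eq_smul_volume_pi hM]
  rfl

theorem Matrix.integral_comp_mulVec [NormedSpace ℝ E] (hM : M.det ≠ 0) (f : (ι → ℝ) → E) :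
    ∫ x, f (M *ᵥ x) = |M.det|⁻¹ • ∫ x, f x := by
  rw [← (measurableEmbedding_mulVec hM).integral_map, map_mulVec_volume hM,
    integral_smul_measure, ENNReal.toReal_ofReal (by positivity)]

theorem Matrix.integrable_comp_mulVec_iff (hM : M.det ≠ 0) {f : (ι → ℝ) → E} :
    Integrable (fun x ↦ f (M *ᵥ x)) ↔ Integrable f := by
  rw [← Function.comp_def, ← (measurableEmbedding_mulVec hM).integrable_map_iff,
    map_mulVec_volume hM, integrable_smul_measure (by simpa using hM) ENNReal.ofReal_ne_top]

end ChangeOfVariables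

section StandardGaussian

variable {ι : Type*} [Fintype ι]

theorem exp_neg_half_dotProduct_self (x : ι → ℝ) :
    exp (-(1 / 2) * (x ⬝ᵥ x)) = ∏ i, exp (-(1 / 2) * x i ^ 2) := by
  simp only [dotProduct, Finset.mul_sum, ← Real.exp_sum, sq]

theorem integrable_exp_neg_half_dotProduct_self :
    Integrable (fun x : ι → ℝ ↦ exp (-(1 / 2) * (x ⬝ᵥ x))) := by
  simp only [exp_neg_half_dotProduct_self]
  exact Integrable.fintype_prod fun _ ↦ integrable_exp_neg_mul_sq one_half_pos

theorem integral_exp_neg_half_dotProduct_self :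
    ∫ x : ι → ℝ, exp (-(1 / 2) * (x ⬝ᵥ x)) = √((2 * π) ^ Fintype.card ι) := by
  simp only [exp_neg_half_dotProduct_self]
  rw [integral_fintype_prod_volume_eq_pow (fun t : ℝ ↦ exp (-(1 / 2) * t ^ 2)), integral_gaussian,
    eq_comm, sqrt_eq_iff_mul_self_eq (by positivity) (by positivity), ← mul_pow,
    mul_self_sqrt (by positivity)]
  ring_nf

end StandardGaussian

section PosDefGaussian

variable {ι : Type*} [Fintype ι] [DecidableEq ι] {C : Matrix ι ι ℝ}

open scoped MatrixOrder in
theorem Matrix.PosDef.exists_sqrt (hC : C.PosDef) :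
    ∃ S : Matrix ι ι ℝ, S.IsSymm ∧ S * S = C ∧ S.det = √C.det := by
  refine ⟨CFC.sqrt C, (CFC.sqrt_nonneg C).posSemidef.isHermitian,
    CFC.sqrt_mul_sqrt_self C hC.posSemidef.nonneg, ?_⟩
  rw [hC.posSemidef.det_sqrt, RCLike.sqrt_of_nonneg hC.posSemidef.det_nonneg, RCLike.re_to_real]
  rfl

theorem Matrix.PosDef.quadForm_inv_mulVec_sqrt (hC : C.PosDef) {S : Matrix ι ι ℝ}
    (hSsymm : S.IsSymm) (hSS : S * S = C) (y : ι → ℝ) :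
    (S *ᵥ y) ⬝ᵥ (C⁻¹ *ᵥ (S *ᵥ y)) = y ⬝ᵥ y := by
  have hS : IsUnit S.det := by
    rw [isUnit_iff_ne_zero, ← pow_ne_zero_iff two_ne_zero, sq, ← det_mul, hSS]
    exact hC.det_pos.ne'
  rw [dotProduct_comm, ← dotProduct_transpose_mulVec, hSsymm.eq, mulVec_mulVec, mulVec_mulVec,
    ← hSS, mul_inv_rev, Matrix.mul_assoc, Matrix.mul_assoc, nonsing_inv_mul _ hS,
    Matrix.mul_one, mul_nonsing_inv _ hS, one_mulVec]

theorem Matrix.PosDef.integrable_exp_neg_half_quadForm (hC : C.PosDef) (b : ι → ℝ) :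
    Integrable (fun x ↦ exp (-(1 / 2) * ((x - b) ⬝ᵥ (C⁻¹ *ᵥ (x - b))))) := by
  obtain ⟨S, hSsymm, hSS, hSdet⟩ := hC.exists_sqrt
  have hS : S.det ≠ 0 := by rw [hSdet]; exact (sqrt_pos.2 hC.det_pos).ne'
  refine Integrable.comp_sub_right (f := fun x ↦ exp (-(1 / 2) * (x ⬝ᵥ (C⁻¹ *ᵥ x)))) ?_ b
  rw [← integrable_comp_mulVec_iff hS]
  simpa only [hC.quadForm_inv_mulVec_sqrt hSsymm hSS] using integrable_exp_neg_half_dotProduct_self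

theorem Matrix.PosDef.integral_exp_neg_half_quadForm (hC : C.PosDef) (b : ι → ℝ) :
    ∫ x, exp (-(1 / 2) * ((x - b) ⬝ᵥ (C⁻¹ *ᵥ (x - b))))
      = √((2 * π) ^ Fintype.card ι * C.det) := by
  obtain ⟨S, hSsymm, hSS, hSdet⟩ := hC.exists_sqrt
  have hS : 0 < S.det := by rw [hSdet]; exact sqrt_pos.2 hC.det_pos
  have hsubst := integral_comp_mulVec hS.ne' fun x ↦ exp (-(1 / 2) * (x ⬝ᵥ (C⁻¹ *ᵥ x)))
  simp only [hC.quadForm_inv_mulVec_sqrt hSsymm hSS, integral_exp_neg_half_dotProduct_self,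
    abs_of_pos hS, smul_eq_mul] at hsubst
  rw [integral_sub_right_eq_self (fun x ↦ exp (-(1 / 2) * (x ⬝ᵥ (C⁻¹ *ᵥ x)))) b,
    sqrt_mul (by positivity), ← hSdet, hsubst]
  field_simp

end PosDefGaussian

section NormalDensity

variable {d : ℕ} {C : Matrix (Fin d) (Fin d) ℝ}

theorem fN_comm (C : Matrix (Fin d) (Fin d) ℝ) (b a : Fin d → ℝ) : fN d C b a = fN d C a b := by
  rw [fN, fN, ← neg_sub b a, mulVec_neg, neg_dotProduct_neg]

theorem fN_eq_inv_sqrt_mul_exp (hC : 0 ≤ C.det) (b a : Fin d → ℝ) :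
    fN d C b a = (√((2 * π) ^ d * C.det))⁻¹ * exp (-(1 / 2) * ((a - b) ⬝ᵥ (C⁻¹ *ᵥ (a - b)))) := by
  rw [fN, sqrt_mul (by positivity), mul_inv, sqrt_eq_rpow, sqrt_eq_rpow, ← rpow_natCast,
    ← rpow_mul (by positivity), ← rpow_neg (by positivity), ← rpow_neg hC]
  ring_nf

theorem Matrix.PosDef.integrable_fN (hC : C.PosDef) (b : Fin d → ℝ) : Integrable (fN d C b) := by
  simp only [funext (fN_eq_inv_sqrt_mul_exp hC.posSemidef.det_nonneg b)]
  exact (hC.integrable_exp_neg_half_quadForm b).const_mul _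

theorem Matrix.PosDef.integral_fN (hC : C.PosDef) (b : Fin d → ℝ) : ∫ a, fN d C b a = 1 := by
  simp only [fN_eq_inv_sqrt_mul_exp hC.posSemidef.det_nonneg b]
  rw [integral_const_mul, hC.integral_exp_neg_half_quadForm, Fintype.card_fin,
    inv_mul_cancel₀ (by have := hC.det_pos; positivity)]

end NormalDensity

namespace Matrix.PosDef

variable {d : ℕ} {A B M : Matrix (Fin d) (Fin d) ℝ}

/-- Bayes' rule for Gaussians: likelihood `N(m, A)` of `y` times prior `N(μ, B)` of `m` equals
the marginal likelihood of `y` times the posterior density of `m`. -/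
theorem fN_mul_fN (hA : A.PosDef) (hB : B.PosDef) (y μ m : Fin d → ℝ) :
    fN d A m y * fN d B μ m
      = fN d (A + B) μ y * fN d (A⁻¹ + B⁻¹)⁻¹ ((A⁻¹ + B⁻¹)⁻¹ *ᵥ (A⁻¹ *ᵥ y + B⁻¹ *ᵥ μ)) m := by
  have hAB := hA.add hB
  have hC := (hA.inv.add hB.inv).inv
  have hZ : √((2 * π) ^ d * A.det) * √((2 * π) ^ d * B.det)
      = √((2 * π) ^ d * (A + B).det) * √((2 * π) ^ d * (A⁻¹ + B⁻¹)⁻¹.det) := by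
    rw [← sqrt_mul (by positivity [hA.det_pos]), ← sqrt_mul (by positivity [hAB.det_pos]),
      det_inv_inv_add_inv hA.isUnit_det hB.isUnit_det]
    field_simp [hAB.det_pos.ne']
  have hexp : exp (-(1 / 2) * ((m - y) ⬝ᵥ (A⁻¹ *ᵥ (m - y))))
        * exp (-(1 / 2) * ((m - μ) ⬝ᵥ (B⁻¹ *ᵥ (m - μ))))
      = exp (-(1 / 2) * ((y - μ) ⬝ᵥ ((A + B)⁻¹ *ᵥ (y - μ))))
        * exp (-(1 / 2) * ((m - (A⁻¹ + B⁻¹)⁻¹ *ᵥ (A⁻¹ *ᵥ y + B⁻¹ *ᵥ μ)) ⬝ᵥ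
          ((A⁻¹ + B⁻¹)⁻¹⁻¹ *ᵥ (m - (A⁻¹ + B⁻¹)⁻¹ *ᵥ (A⁻¹ *ᵥ y + B⁻¹ *ᵥ μ))))) := by
    rw [← exp_add, ← exp_add, ← mul_add, ← mul_add,
      hA.inv.isSymm.dotProduct_mulVec_add_dotProduct_mulVec hB.inv.isSymm
        (hA.inv.add hB.inv).isUnit_det,
      inv_sub_inv_mul_inv_inv_add_inv_mul_inv hA.isUnit_det hB.isUnit_det hAB.isUnit_det,
      nonsing_inv_nonsing_inv _ (hA.inv.add hB.inv).isUnit_det, add_comm]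
  rw [fN_comm, fN_eq_inv_sqrt_mul_exp hA.posSemidef.det_nonneg,
    fN_eq_inv_sqrt_mul_exp hB.posSemidef.det_nonneg, fN_eq_inv_sqrt_mul_exp hAB.posSemidef.det_nonneg,
    fN_eq_inv_sqrt_mul_exp hC.posSemidef.det_nonneg, mul_mul_mul_comm, ← mul_inv, hZ, hexp, mul_inv,
    mul_mul_mul_comm]

theorem integrable_fN_mul_fN (hA : A.PosDef) (hB : B.PosDef) (y μ : Fin d → ℝ) :
    Integrable fun m ↦ fN d A m y * fN d B μ m := by
  simp only [hA.fN_mul_fN hB]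
  exact ((hA.inv.add hB.inv).inv.integrable_fN _).const_mul _

theorem integral_fN_mul_fN (hA : A.PosDef) (hB : B.PosDef) (y μ : Fin d → ℝ) :
    ∫ m, fN d A m y * fN d B μ m = fN d (A + B) μ y := by
  simp only [hA.fN_mul_fN hB]
  rw [integral_const_mul, (hA.inv.add hB.inv).inv.integral_fN, mul_one]

theorem fN_sq (hM : M.PosDef) (b a : Fin d → ℝ) :
    fN d M b a ^ 2
      = ((2 : ℝ) ^ d * π ^ ((d : ℝ) / 2) * M.det ^ ((1 : ℝ) / 2))⁻¹
        * fN d ((1 / 2 : ℝ) • M) b a := by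
  have hdet := hM.det_pos
  have hinv : ((1 / 2 : ℝ) • M)⁻¹ = (2 : ℝ) • M⁻¹ :=
    inv_eq_left_inv (by rw [smul_mul_smul_comm, nonsing_inv_mul _ hM.isUnit_det]; norm_num)
  have hZ : (2 * π) ^ d * M.det = (2 : ℝ) ^ d * π ^ ((d : ℝ) / 2) * M.det ^ ((1 : ℝ) / 2)
      * √((2 * π) ^ d * ((1 / 2) ^ d * M.det)) := by
    have hhalf : (2 * π) ^ d * ((1 / 2) ^ d * M.det) = π ^ d * M.det := by
      rw [← mul_assoc, ← mul_pow]; ring_nf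
    rw [hhalf, ← sqrt_eq_rpow, div_eq_mul_one_div (d : ℝ), rpow_mul pi_pos.le, rpow_natCast,
      ← sqrt_eq_rpow, mul_assoc ((2 : ℝ) ^ d), ← sqrt_mul (by positivity), mul_assoc,
      mul_self_sqrt (by positivity), mul_pow, mul_assoc]
  rw [fN_eq_inv_sqrt_mul_exp hM.posSemidef.det_nonneg,
    fN_eq_inv_sqrt_mul_exp (hM.smul one_half_pos).posSemidef.det_nonneg, hinv,
    det_smul, Fintype.card_fin, mul_pow, inv_pow, sq_sqrt (by positivity), ← exp_nat_mul,
    smul_mulVec, dotProduct_smul, smul_eq_mul, hZ]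
  field_simp
  ring_nf

end Matrix.PosDef

theorem lemma_3_2_general (d : ℕ) (V St Φ : Matrix (Fin d) (Fin d) ℝ)
    (hV : V.PosDef) (hΦ : Φ.PosDef) (hStΦ : (St - Φ).PosSemidef)
    (hVStΦ : (V + St - Φ).PosDef) (y μt : Fin d → ℝ) :
    (∫ m : Fin d → ℝ,
        (((2 : ℝ) ^ d * Real.pi ^ ((d : ℝ) / 2) * V.det ^ ((1 : ℝ) / 2))⁻¹ *
            fN d ((1 / 2 : ℝ) • V + (St - Φ)) m y -
          (fN d (V + St - Φ) m y) ^ 2) * fN d Φ μt m) =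
      ((2 : ℝ) ^ d * Real.pi ^ ((d : ℝ) / 2) * V.det ^ ((1 : ℝ) / 2))⁻¹ *
          fN d ((1 / 2 : ℝ) • V + St) μt y -
        ((2 : ℝ) ^ d * Real.pi ^ ((d : ℝ) / 2) * (V + St - Φ).det ^ ((1 : ℝ) / 2))⁻¹ *
          fN d ((1 / 2 : ℝ) • (V + St + Φ)) μt y := by
  have h₁ : ((1 / 2 : ℝ) • V + (St - Φ)).PosDef := (hV.smul one_half_pos).add_posSemidef hStΦ
  have h₂ : ((1 / 2 : ℝ) • (V + St - Φ)).PosDef := hVStΦ.smul one_half_pos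
  simp only [hVStΦ.fN_sq, sub_mul, mul_assoc]
  rw [integral_sub ((h₁.integrable_fN_mul_fN hΦ y μt).const_mul _)
      ((h₂.integrable_fN_mul_fN hΦ y μt).const_mul _), integral_const_mul, integral_const_mul,
    h₁.integral_fN_mul_fN hΦ, h₂.integral_fN_mul_fN hΦ, add_assoc, sub_add_cancel]
  congr 3
  module

/-- Lemma 3.2 of the paper: the expected look-ahead variance of the likelihood.
After a hypothetical observation, the emulator mean `μ_{t+1}(θ) ~ N(μ_t(θ), Φ)` and
the emulator covariance becomes `S_t(θ) − Φ`; averaging the look-ahead variance of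
`p(y|θ)` over the Gaussian law of `μ_{t+1}(θ)` gives the closed form used in EIVAR. -/
theorem lemma_3_2 (d : ℕ) (V St Φ : Matrix (Fin d) (Fin d) ℝ)
    (hV : V.PosDef) (hSt : St.PosDef) (hΦ : Φ.PosDef) (hStΦ : (St - Φ).PosSemidef)
    (hVStΦ : (V + St - Φ).PosDef) (y μt : Fin d → ℝ) :
    (∫ m : Fin d → ℝ,
        (((2 : ℝ) ^ d * Real.pi ^ ((d : ℝ) / 2) * V.det ^ ((1 : ℝ) / 2))⁻¹ *
            fN d ((1 / 2 : ℝ) • V + (St - Φ)) m y -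
          (fN d (V + St - Φ) m y) ^ 2) * fN d Φ μt m) =
      ((2 : ℝ) ^ d * Real.pi ^ ((d : ℝ) / 2) * V.det ^ ((1 : ℝ) / 2))⁻¹ *
          fN d ((1 / 2 : ℝ) • V + St) μt y -
        ((2 : ℝ) ^ d * Real.pi ^ ((d : ℝ) / 2) * (V + St - Φ).det ^ ((1 : ℝ) / 2))⁻¹ *
          fN d ((1 / 2 : ℝ) • (V + St + Φ)) μt y :=
  lemma_3_2_general d V St Φ hV hΦ hStΦ hVStΦ y μt
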